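/- arXiv:math/0609099 — 2 statements merged into one kernel-verified Lean document; each statement's English description precedes it below -/
import Mathlib

section
/- Let X be a connected topological space and P₁, P₂ ⊆ X disjoint closed connected sets, each separating X into exactly two open components. Suppose X \ P₁ = A₁ ∪ B₁ and X \ P₂ = A₂ ∪ B₂ (disjoint open sets) with P₂ ⊆ B₁ and P₁ ⊆ A₂. Then A₁ ⊆ A₂, and moreover A₁ is strictly contained in A₂ since P₁ ⊆ A₂ \ A₁. -/
/-- Two disjoint closed connected separating sets: with `X \ Pᵢ = Aᵢ ∪ Bᵢ` (disjoint,
open, nonempty), `P₂ ⊆ B₁` and `P₁ ⊆ A₂`, we get `A₁ ⊆ A₂` and `P₁ ⊆ A₂ \ A₁`. -/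
theorem nested_separating_sets
    {X : Type*} [TopologicalSpace X] (hX : IsConnected (Set.univ : Set X))
    (P₁ P₂ A₁ B₁ A₂ B₂ : Set X)
    (hP₁ : IsClosed P₁) (hP₂ : IsClosed P₂)
    (hP₁c : IsConnected P₁) (hP₂c : IsConnected P₂) (hPdisj : Disjoint P₁ P₂)
    (hA₁ : IsOpen A₁) (hB₁ : IsOpen B₁) (hA₂ : IsOpen A₂) (hB₂ : IsOpen B₂)
    (hA₁ne : A₁.Nonempty) (hB₁ne : B₁.Nonempty) (hA₂ne : A₂.Nonempty) (hB₂ne : B₂.Nonempty)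
    (hd₁ : Disjoint A₁ B₁) (hd₂ : Disjoint A₂ B₂)
    (hc₁ : P₁ᶜ = A₁ ∪ B₁) (hc₂ : P₂ᶜ = A₂ ∪ B₂)
    (hP₂B₁ : P₂ ⊆ B₁) (hP₁A₂ : P₁ ⊆ A₂) :
    A₁ ⊆ A₂ ∧ P₁ ⊆ A₂ \ A₁ := by
  have hA₁P₁ : ∀ x ∈ A₁, x ∉ P₁ := by
    intro x hx
    have : x ∈ P₁ᶜ := hc₁ ▸ Set.mem_union_left _ hx
    exact this
  -- closure A₁ ⊆ A₁ ∪ P₁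
  have hclA₁ : closure A₁ ⊆ A₁ ∪ P₁ := by
    have h1 : closure A₁ ⊆ B₁ᶜ :=
      closure_minimal (Set.disjoint_left.mp hd₁) hB₁.isClosed_compl
    intro x hx
    by_cases hxP : x ∈ P₁
    · exact Or.inr hxP
    · have : x ∈ A₁ ∪ B₁ := hc₁ ▸ hxP
      rcases this with h | h
      · exact Or.inl h
      · exact absurd h (h1 hx)
  -- closure B₂ ⊆ B₂ ∪ P₂
  have hclB₂ : closure B₂ ⊆ B₂ ∪ P₂ := by
    have h1 : closure B₂ ⊆ A₂ᶜ :=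
      closure_minimal (Set.disjoint_right.mp hd₂) hA₂.isClosed_compl
    intro x hx
    by_cases hxP : x ∈ P₂
    · exact Or.inr hxP
    · have : x ∈ A₂ ∪ B₂ := hc₂ ▸ hxP
      rcases this with h | h
      · exact absurd h (h1 hx)
      · exact Or.inl h
  have key : A₁ ⊆ A₂ := by
    by_contra h
    rw [Set.not_subset] at h
    obtain ⟨x, hxA₁, hxA₂⟩ := h
    -- x ∈ B₂ since x ∉ P₂ (as x ∈ A₁ disjoint from B₁ ⊇ P₂)
    have hxP₂ : x ∉ P₂ := fun hxP => Set.disjoint_left.mp hd₁ hxA₁ (hP₂B₁ hxP)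
    have hxB₂ : x ∈ B₂ := by
      have : x ∈ A₂ ∪ B₂ := hc₂ ▸ hxP₂
      exact this.resolve_left hxA₂
    -- C := A₁ ∩ B₂ is clopen and nonempty
    set C := A₁ ∩ B₂ with hC
    have hCopen : IsOpen C := hA₁.inter hB₂
    have hCclosed : IsClosed C := by
      rw [← closure_subset_iff_isClosed]
      intro y hy
      have hyA : y ∈ A₁ ∪ P₁ := hclA₁ ((closure_mono Set.inter_subset_left) hy)
      have hyB : y ∈ B₂ ∪ P₂ := hclB₂ ((closure_mono Set.inter_subset_right) hy)
      rcases hyA with hyA | hyA <;> rcases hyB with hyB | hyB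
      · exact ⟨hyA, hyB⟩
      · exact absurd (hP₂B₁ hyB) (Set.disjoint_left.mp hd₁ hyA)
      · exact absurd hyB (Set.disjoint_left.mp hd₂ (hP₁A₂ hyA))
      · exact absurd hyB (Set.disjoint_left.mp hPdisj hyA)
    have : PreconnectedSpace X := preconnectedSpace_iff_univ.mpr hX.isPreconnected
    have hCuniv : C = Set.univ := (IsClopen.eq_univ ⟨hCclosed, hCopen⟩ ⟨x, hxA₁, hxB₂⟩)
    obtain ⟨p, hp⟩ := hP₁c.nonempty
    have : p ∈ C := hCuniv ▸ Set.mem_univ p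
    exact hA₁P₁ p this.1 hp
  exact ⟨key, fun x hx => ⟨hP₁A₂ hx, fun hxA => hA₁P₁ x hxA hx⟩⟩
end

section
/- Let (Γᵢ) be a sequence of pairwise disjoint simple closed curves in S², each bounding a closed disk Eᵢ with Eᵢ ⊆ int(E_{i+1}), and suppose ⋃ᵢ Eᵢ = Ω for an open disk Ω with boundary Γ. Then Γᵢ → Γ in the Hausdorff distance on S². -/
open Metric Set Filter

/-- A preconnected set meeting both a closed set and its complement meets its frontier. -/
lemma preconnected_inter_frontier_nonempty' {X : Type*} [TopologicalSpace X] {U t : Set X}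
    (hU : IsPreconnected U) (ht : IsClosed t) (h1 : (U ∩ t).Nonempty)
    (h2 : (U \ t).Nonempty) : (U ∩ frontier t).Nonempty := by
  by_contra h
  rw [Set.not_nonempty_iff_eq_empty] at h
  have hmem : ∀ x ∈ U, x ∈ t → x ∈ interior t := by
    intro x hxU hxt
    have hxf : x ∉ frontier t := fun hf => (Set.eq_empty_iff_forall_notMem.mp h x) ⟨hxU, hf⟩
    have hxcl : x ∈ interior t ∪ frontier t := by
      rw [← closure_eq_interior_union_frontier t]; exact subset_closure hxt
    rcases hxcl with h' | h'
    · exact h'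
    · exact absurd h' hxf
  have hcov : U ⊆ interior t ∪ tᶜ := by
    intro x hx
    by_cases hxt : x ∈ t
    · exact Or.inl (hmem x hx hxt)
    · exact Or.inr hxt
  obtain ⟨x, hxU, hxt⟩ := h1
  obtain ⟨y, hyU, hyt⟩ := h2
  obtain ⟨z, _, hz1, hz2⟩ := hU (interior t) tᶜ isOpen_interior ht.isOpen_compl hcov
    ⟨x, hxU, hmem x hxU hxt⟩ ⟨y, hyU, hyt⟩
  exact hz2 (interior_subset hz1)

/-- If nested closed disks `Eᵢ` (with pairwise disjoint boundary curves
`Γᵢ = ∂Eᵢ`) exhaust an open disk `Ω` in `S²` with boundary `Γ = ∂Ω`, then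
`Γᵢ → Γ` in the Hausdorff distance. -/
theorem boundary_curves_tendsto_hausdorff
    (E : ℕ → Set (Metric.sphere (0 : EuclideanSpace ℝ (Fin 3)) 1))
    (Ω : Set (Metric.sphere (0 : EuclideanSpace ℝ (Fin 3)) 1))
    (hΩopen : IsOpen Ω)
    (hΩdisk : Nonempty (Ω ≃ₜ Metric.ball (0 : EuclideanSpace ℝ (Fin 2)) 1))
    (hEdisk : ∀ i, Nonempty (E i ≃ₜ Metric.closedBall (0 : EuclideanSpace ℝ (Fin 2)) 1))
    (hnest : ∀ i, E i ⊆ interior (E (i + 1)))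
    (hsub : ∀ i, E i ⊆ Ω)
    (hunion : (⋃ i, E i) = Ω)
    (hdisjoint : ∀ i j, i ≠ j → Disjoint (frontier (E i)) (frontier (E j))) :
    Filter.Tendsto
      (fun i => Metric.hausdorffDist (frontier (E i)) (frontier Ω))
      Filter.atTop (nhds 0) := by
  haveI : LocallyConnectedSpace (Metric.sphere (0 : EuclideanSpace ℝ (Fin 3)) 1) :=
    ChartedSpace.locallyConnectedSpace (EuclideanSpace ℝ (Fin 2)) _
  haveI : PreconnectedSpace (Metric.sphere (0 : EuclideanSpace ℝ (Fin 3)) 1) := by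
    apply Subtype.preconnectedSpace
    apply (isConnected_sphere ?_ 0 zero_le_one).isPreconnected
    rw [← Module.finrank_eq_rank, finrank_euclideanSpace_fin]
    norm_cast
  -- monotonicity
  have hmono : Monotone E := monotone_nat_of_le_succ fun i => (hnest i).trans interior_subset
  -- each E i is compact, closed, nonempty
  have hEcpt : ∀ i, IsCompact (E i) := by
    intro i
    haveI : CompactSpace (Metric.closedBall (0 : EuclideanSpace ℝ (Fin 2)) 1) :=
      isCompact_iff_compactSpace.mp (isCompact_closedBall _ _)
    exact isCompact_iff_compactSpace.mpr ((hEdisk i).some.symm.compactSpace)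
  have hEclosed : ∀ i, IsClosed (E i) := fun i => (hEcpt i).isClosed
  have hEne : ∀ i, (E i).Nonempty := by
    intro i
    haveI : Nonempty (Metric.closedBall (0 : EuclideanSpace ℝ (Fin 2)) 1) :=
      ⟨⟨0, Metric.mem_closedBall_self zero_le_one⟩⟩
    exact Set.nonempty_coe_sort.mp ((hEdisk i).some.toEquiv.nonempty)
  -- Ω is a nonempty proper open subset
  have hΩne : Ω.Nonempty := ⟨(hEne 0).some, hsub 0 (hEne 0).some_mem⟩
  have hΩneq : Ω ≠ Set.univ := by
    intro huniv
    haveI : CompactSpace Ω := isCompact_iff_compactSpace.mp (huniv ▸ isCompact_univ)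
    have hballcpt : IsCompact (Metric.ball (0 : EuclideanSpace ℝ (Fin 2)) 1) :=
      isCompact_iff_compactSpace.mpr (hΩdisk.some.compactSpace)
    have hcl : closure (Metric.ball (0 : EuclideanSpace ℝ (Fin 2)) 1)
        = Metric.ball (0 : EuclideanSpace ℝ (Fin 2)) 1 := hballcpt.isClosed.closure_eq
    rw [closure_ball (0 : EuclideanSpace ℝ (Fin 2)) one_ne_zero] at hcl
    have hx : EuclideanSpace.single (0 : Fin 2) (1 : ℝ)
        ∈ Metric.closedBall (0 : EuclideanSpace ℝ (Fin 2)) 1 := by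
      simp [Metric.mem_closedBall, dist_zero_right, EuclideanSpace.norm_single]
    rw [hcl] at hx
    simp [Metric.mem_ball, dist_zero_right, EuclideanSpace.norm_single] at hx
  -- nonempty frontiers
  have hfrΩ : (frontier Ω).Nonempty := nonempty_frontier_iff.mpr ⟨hΩne, hΩneq⟩
  have hfrE : ∀ i, (frontier (E i)).Nonempty := fun i =>
    nonempty_frontier_iff.mpr ⟨hEne i, fun h => hΩneq (Set.eq_univ_of_univ_subset (h ▸ hsub i))⟩
  -- interiors exhaust Ω
  have hiUnion : (⋃ i, interior (E i)) = Ω := by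
    apply subset_antisymm
    · exact Set.iUnion_subset fun i => interior_subset.trans (hsub i)
    · intro x hx
      rw [← hunion] at hx
      obtain ⟨i, hi⟩ := Set.mem_iUnion.mp hx
      exact Set.mem_iUnion.mpr ⟨i + 1, hnest i hi⟩
  -- frontier Ω does not meet Ω
  have hfrΩΩ : ∀ y ∈ frontier Ω, y ∉ Ω := by
    intro y hy
    rw [hΩopen.frontier_eq] at hy
    exact hy.2
  -- Direction 1: frontier (E j) is eventually in the ε-thickening of frontier Ω
  have dir1 : ∀ ε > (0 : ℝ), ∃ N, ∀ j ≥ N, ∀ x ∈ frontier (E j),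
      ∃ y ∈ frontier Ω, dist x y ≤ 2 * ε := by
    intro ε hε
    set K : ℕ → Set (Metric.sphere (0 : EuclideanSpace ℝ (Fin 3)) 1) := fun i =>
      closure Ω ∩ (interior (E i))ᶜ ∩ (Metric.thickening ε (frontier Ω))ᶜ with hK
    have hKclosed : ∀ i, IsClosed (K i) := fun i =>
      (isClosed_closure.inter isOpen_interior.isClosed_compl).inter
        Metric.isOpen_thickening.isClosed_compl
    have hKanti : Antitone K := by
      intro i j hij
      exact Set.inter_subset_inter_left _ (Set.inter_subset_inter_right _
        (Set.compl_subset_compl.mpr (interior_mono (hmono hij))))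
    have hKiInter : (⋂ i, K i) = ∅ := by
      rw [Set.eq_empty_iff_forall_notMem]
      intro x hx
      have h1 : ∀ i, x ∈ K i := Set.mem_iInter.mp hx
      have hxcl : x ∈ closure Ω := (h1 0).1.1
      have hxnotΩ : x ∉ Ω := by
        intro hxΩ
        rw [← hiUnion] at hxΩ
        obtain ⟨i, hi⟩ := Set.mem_iUnion.mp hxΩ
        exact (h1 i).1.2 hi
      have hxfr : x ∈ frontier Ω := by rw [hΩopen.frontier_eq]; exact ⟨hxcl, hxnotΩ⟩
      exact (h1 0).2 (Metric.self_subset_thickening hε _ hxfr)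
    have hex : ∃ N, K N = ∅ := by
      by_contra h
      push_neg at h
      have hne : ∀ i, (K i).Nonempty := h
      have := IsCompact.nonempty_iInter_of_directed_nonempty_isCompact_isClosed K
        (fun i j => ⟨max i j, hKanti (le_max_left i j), hKanti (le_max_right i j)⟩)
        hne (fun i => (hKclosed i).isCompact) hKclosed
      rw [hKiInter] at this
      exact Set.not_nonempty_empty this
    obtain ⟨N, hN⟩ := hex
    refine ⟨N, fun j hj x hx => ?_⟩
    have hxE : x ∈ E j := (hEclosed j).frontier_subset hx
    have hxcl : x ∈ closure Ω := subset_closure (hsub j hxE)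
    have hxnotint : x ∉ interior (E N) := fun hxint =>
      hx.2 (interior_mono (hmono hj) hxint)
    have hxth : x ∈ Metric.thickening ε (frontier Ω) := by
      by_contra hth
      exact (Set.eq_empty_iff_forall_notMem.mp hN x) ⟨⟨hxcl, hxnotint⟩, hth⟩
    obtain ⟨y, hy, hd⟩ := Metric.mem_thickening_iff.mp hxth
    exact ⟨y, hy, by linarith⟩
  -- Direction 2: every point of frontier Ω is eventually close to frontier (E j)
  have dir2 : ∀ ε > (0 : ℝ), ∃ N, ∀ j ≥ N, ∀ y ∈ frontier Ω,
      ∃ x ∈ frontier (E j), dist y x ≤ 2 * ε := by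
    intro ε hε
    have key : ∀ y : Metric.sphere (0 : EuclideanSpace ℝ (Fin 3)) 1, ∃ (U : Set (Metric.sphere (0 : EuclideanSpace ℝ (Fin 3)) 1)) (n : ℕ), y ∈ frontier Ω →
        IsOpen U ∧ y ∈ U ∧ IsPreconnected U ∧ U ⊆ Metric.ball y ε ∧ (U ∩ E n).Nonempty := by
      intro y
      by_cases hy : y ∈ frontier Ω
      · obtain ⟨U, ⟨hUo, hyU, hUc⟩, hUb⟩ :=
          (LocallyConnectedSpace.open_connected_basis y).mem_iff.mp
            (Metric.ball_mem_nhds y hε)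
        have hycl : y ∈ closure Ω := frontier_subset_closure hy
        have : (U ∩ Ω).Nonempty :=
          mem_closure_iff_nhds.mp hycl U (hUo.mem_nhds hyU)
        obtain ⟨x, hxU, hxΩ⟩ := this
        rw [← hunion] at hxΩ
        obtain ⟨n, hn⟩ := Set.mem_iUnion.mp hxΩ
        exact ⟨U, n, fun _ => ⟨hUo, hyU, hUc.isPreconnected, hUb, ⟨x, hxU, hn⟩⟩⟩
      · exact ⟨∅, 0, fun h => absurd h hy⟩
    choose U n hkey using key
    have hΓcpt : IsCompact (frontier Ω) := isClosed_frontier.isCompact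
    obtain ⟨t, hts, hcov⟩ := hΓcpt.elim_nhds_subcover U
      (fun y hy => ((hkey y hy).1).mem_nhds (hkey y hy).2.1)
    refine ⟨t.sup n, fun j hj y' hy' => ?_⟩
    obtain ⟨y, hyt, hy'U⟩ := Set.mem_iUnion₂.mp (hcov hy')
    have hk := hkey y (hts y hyt)
    obtain ⟨x, hxU, hxE⟩ := hk.2.2.2.2
    have hxEj : x ∈ E j := hmono (le_trans (Finset.le_sup hyt) hj) hxE
    have hy'notE : y' ∉ E j := fun h => hfrΩΩ y' hy' (hsub j h)
    obtain ⟨z, hzU, hzfr⟩ := preconnected_inter_frontier_nonempty' hk.2.2.1 (hEclosed j)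
      ⟨x, hxU, hxEj⟩ ⟨y', hy'U, hy'notE⟩
    refine ⟨z, hzfr, ?_⟩
    have h1 : dist y' y < ε := hk.2.2.2.1 hy'U
    have h2 : dist z y < ε := hk.2.2.2.1 hzU
    calc dist y' z ≤ dist y' y + dist y z := dist_triangle _ _ _
      _ ≤ 2 * ε := by rw [dist_comm y z]; linarith
  -- combine
  have main : ∀ ε > (0 : ℝ), ∃ N, ∀ j ≥ N,
      Metric.hausdorffDist (frontier (E j)) (frontier Ω) ≤ 2 * ε := by
    intro ε hε
    obtain ⟨N₁, h₁⟩ := dir1 ε hε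
    obtain ⟨N₂, h₂⟩ := dir2 ε hε
    refine ⟨max N₁ N₂, fun j hj => ?_⟩
    exact Metric.hausdorffDist_le_of_mem_dist (by positivity)
      (h₁ j (le_trans (le_max_left _ _) hj))
      (h₂ j (le_trans (le_max_right _ _) hj))
  rw [Metric.tendsto_atTop]
  intro δ hδ
  obtain ⟨N, hN⟩ := main (δ / 3) (by positivity)
  refine ⟨N, fun j hj => ?_⟩
  rw [Real.dist_eq, sub_zero, abs_of_nonneg Metric.hausdorffDist_nonneg]
  linarith [hN j hj]
end
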